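/- For every x ∈ (0, π/2) and every positive integer n, 2 + (1/cos x)·Σ_{k=2}^{2n+1} (-1)^{k} D(k) x^{2k} < (sin x / x)² + (tan x)/x < 2 + (1/cos x)·Σ_{k=2}^{2n} (-1)^{k} D(k) x^{2k}. -/

import Mathlib

/-!
Write `A(x) = (sin x / x)² + tan x / x`. The identity `cos x sin² x = (cos x - cos 3x) / 4` and
the Taylor series of `sin` and `cos` give `cos x · (A(x) - 2) = ∑_{k ≥ 2} (-1)^k D(k) x^{2k}`
(the terms `k = 0, 1` vanish). Since `4 D(k + 1) < D(k)` for `k ≥ 2` and `x² < 4` on `(0, π/2)`,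
the terms `D(k) x^{2k}` decrease strictly, so the partial sums of this alternating series bound
its value strictly from alternating sides; dividing by `cos x > 0` gives the claim.
-/

open Real Finset

/-- The coefficient `D(k) = (3^(2k+2) - 32k² - 40k - 9) / (4·(2k+2)!)`. -/
noncomputable def wchD (k : ℕ) : ℝ :=
  ((3 : ℝ) ^ (2 * k + 2) - 32 * (k : ℝ) ^ 2 - 40 * (k : ℝ) - 9) /
    (4 * (Nat.factorial (2 * k + 2) : ℝ))

open Filter Topology

section AlternatingSeries

variable {E : Type*} [Ring E] [PartialOrder E] [IsOrderedRing E]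
  [TopologicalSpace E] [OrderClosedTopology E] {l : E} {f : ℕ → E}

theorem StrictAnti.alternating_series_lt_tendsto
    (hfl : Tendsto (fun n ↦ ∑ i ∈ range n, (-1) ^ i * f i) atTop (𝓝 l))
    (hfa : StrictAnti f) (k : ℕ) : ∑ i ∈ range (2 * k), (-1) ^ i * f i < l :=
  calc ∑ i ∈ range (2 * k), (-1) ^ i * f i
      < ∑ i ∈ range (2 * k), (-1) ^ i * f i + (f (2 * k) - f (2 * k + 1)) :=
        lt_add_of_pos_right _ (sub_pos.2 (hfa (by lia)))
    _ = ∑ i ∈ range (2 * (k + 1)), (-1) ^ i * f i := by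
        have h₀ : (-1 : E) ^ (2 * k) = 1 := by simp
        have h₁ : (-1 : E) ^ (2 * k + 1) = -1 := by simp [pow_succ]
        rw [show 2 * (k + 1) = 2 * k + 1 + 1 by ring, sum_range_succ, sum_range_succ, h₀, h₁,
          one_mul, neg_one_mul]
        abel
    _ ≤ l := hfa.antitone.alternating_series_le_tendsto hfl (k + 1)

theorem StrictAnti.tendsto_lt_alternating_series
    (hfl : Tendsto (fun n ↦ ∑ i ∈ range n, (-1) ^ i * f i) atTop (𝓝 l))
    (hfa : StrictAnti f) (k : ℕ) : l < ∑ i ∈ range (2 * k + 1), (-1) ^ i * f i :=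
  calc l ≤ ∑ i ∈ range (2 * (k + 1) + 1), (-1) ^ i * f i :=
        hfa.antitone.tendsto_le_alternating_series hfl (k + 1)
    _ = ∑ i ∈ range (2 * k + 1), (-1) ^ i * f i - (f (2 * k + 1) - f (2 * k + 2)) := by
        rw [show 2 * (k + 1) + 1 = 2 * k + 1 + 1 + 1 by ring, sum_range_succ, sum_range_succ]
        have h₁ : (-1 : E) ^ (2 * k + 1) = -1 := by simp [pow_succ]
        have h₂ : (-1 : E) ^ (2 * k + 1 + 1) = 1 := by simp [pow_succ]
        rw [h₁, h₂, neg_one_mul, one_mul]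
        abel
    _ < ∑ i ∈ range (2 * k + 1), (-1) ^ i * f i :=
        sub_lt_self _ (sub_pos.2 (hfa (by lia)))

end AlternatingSeries

lemma three_mul_quadratic_le_three_pow {k : ℕ} (hk : 2 ≤ k) :
    3 * (32 * (k : ℝ) ^ 2 + 40 * k + 9) ≤ 3 ^ (2 * k + 2) := by
  induction k, hk using Nat.le_induction with
  | base => norm_num
  | succ n hn ih =>
    have hn' : (2 : ℝ) ≤ n := by exact_mod_cast hn
    rw [show 2 * (n + 1) + 2 = 2 * n + 2 + 2 by ring, pow_add]
    push_cast
    nlinarith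

lemma wchD_pos {k : ℕ} (hk : 2 ≤ k) : 0 < wchD k := by
  have hpow := three_mul_quadratic_le_three_pow hk
  unfold wchD
  apply div_pos _ (by positivity)
  nlinarith [sq_nonneg (k : ℝ)]

lemma wchD_succ_mul_four_lt {k : ℕ} (hk : 2 ≤ k) : wchD (k + 1) * 4 < wchD k := by
  have hpow := three_mul_quadratic_le_three_pow hk
  have hk' : (2 : ℝ) ≤ k := by exact_mod_cast hk
  have hfac : ((2 * (k + 1) + 2).factorial : ℝ) =
      (2 * k + 4) * (2 * k + 3) * (2 * k + 2).factorial := by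
    rw [show 2 * (k + 1) + 2 = 2 * k + 2 + 1 + 1 by ring, Nat.factorial_succ, Nat.factorial_succ]
    push_cast; ring
  have h3 : (3 : ℝ) ^ (2 * (k + 1) + 2) = 9 * 3 ^ (2 * k + 2) := by
    rw [show 2 * (k + 1) + 2 = 2 + (2 * k + 2) by ring, pow_add]; norm_num
  set a : ℝ := 3 ^ (2 * k + 2)
  have key : 4 * (9 * a - 32 * ((k : ℝ) + 1) ^ 2 - 40 * ((k : ℝ) + 1) - 9) <
      (a - 32 * (k : ℝ) ^ 2 - 40 * k - 9) * ((2 * k + 4) * (2 * k + 3)) := by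
    nlinarith [mul_le_mul_of_nonneg_left (show (56 : ℝ) ≤ (2 * k + 4) * (2 * k + 3) by nlinarith)
      (show 0 ≤ a - 32 * (k : ℝ) ^ 2 - 40 * k - 9 by nlinarith)]
  have hF : (0 : ℝ) < (2 * k + 2).factorial := by positivity
  unfold wchD
  rw [hfac, h3, div_mul_eq_mul_div, div_lt_div_iff₀ (by positivity) (by positivity)]
  push_cast
  nlinarith [mul_lt_mul_of_pos_right key (mul_pos hF (by norm_num : (0 : ℝ) < 16))]

lemma hasSum_wchD_mul_pow_add_two (x : ℝ) :
    HasSum (fun k ↦ (-1) ^ k * wchD k * x ^ (2 * k + 2))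
      (cos x * sin x ^ 2 + x * sin x - 2 * x ^ 2 * cos x) := by
  have hcos (r : ℝ) : HasSum
      (fun k : ℕ ↦ (-1) ^ (k + 1) * r ^ (2 * (k + 1)) / (2 * (k + 1)).factorial) (cos r - 1) := by
    simpa using (hasSum_nat_add_iff' 1).2 (Real.hasSum_cos r)
  have hsum := ((((hcos x).sub (hcos (3 * x))).div_const 4).add
    ((Real.hasSum_sin x).mul_left x)).sub ((Real.hasSum_cos x).mul_left (2 * x ^ 2))
  rw [show cos x * sin x ^ 2 = (cos x - 1 - (cos (3 * x) - 1)) / 4 by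
    rw [cos_three_mul, sin_sq]; ring]
  refine hsum.congr_fun fun k ↦ ?_
  have h₁ : ((2 * k + 1).factorial : ℝ) = (2 * k + 1) * (2 * k).factorial := by
    rw [Nat.factorial_succ]; push_cast; ring
  have h₂ : ((2 * (k + 1)).factorial : ℝ) = (2 * k + 2) * (2 * k + 1) * (2 * k).factorial := by
    rw [show 2 * (k + 1) = 2 * k + 1 + 1 by ring, Nat.factorial_succ, Nat.cast_mul, h₁]
    push_cast; ring
  unfold wchD
  rw [show 2 * k + 2 = 2 * (k + 1) by ring, h₂, h₁, mul_pow]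
  field_simp
  ring

lemma hasSum_wchD_mul_pow {x : ℝ} (hx : x ≠ 0) (hcos : cos x ≠ 0) :
    HasSum (fun k ↦ (-1) ^ k * wchD k * x ^ (2 * k))
      (cos x * ((sin x / x) ^ 2 + tan x / x - 2)) := by
  have hsum := (hasSum_wchD_mul_pow_add_two x).div_const (x ^ 2)
  rw [show cos x * ((sin x / x) ^ 2 + tan x / x - 2) =
      (cos x * sin x ^ 2 + x * sin x - 2 * x ^ 2 * cos x) / x ^ 2 by
    rw [tan_eq_sin_div_cos]; field_simp]
  refine hsum.congr_fun fun k ↦ ?_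
  rw [pow_add, mul_div_assoc, mul_div_cancel_right₀ _ (pow_ne_zero 2 hx)]

lemma wchD_zero : wchD 0 = 0 := by norm_num [wchD]

lemma wchD_one : wchD 1 = 0 := by norm_num [wchD, Nat.factorial]

lemma strictAnti_wchD_add_two_mul_pow {x : ℝ} (hx₀ : x ≠ 0) (hx : x ^ 2 < 4) :
    StrictAnti fun j ↦ wchD (j + 2) * x ^ (2 * (j + 2)) := by
  refine strictAnti_nat_of_succ_lt fun j ↦ ?_
  have hpos : 0 < x ^ (2 * (j + 2)) := by rw [pow_mul]; exact pow_pos (by positivity) _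
  calc wchD (j + 1 + 2) * x ^ (2 * (j + 1 + 2))
        = wchD (j + 2 + 1) * x ^ 2 * x ^ (2 * (j + 2)) := by ring_nf
    _ < wchD (j + 2) * x ^ (2 * (j + 2)) := by
        gcongr
        calc wchD (j + 2 + 1) * x ^ 2 ≤ wchD (j + 2 + 1) * 4 :=
              mul_le_mul_of_nonneg_left hx.le (wchD_pos (by lia)).le
          _ < wchD (j + 2) := wchD_succ_mul_four_lt (by lia)

lemma sum_Icc_two_eq_sum_range {M : Type*} [AddCommMonoid M] (g : ℕ → M) (m : ℕ) :
    ∑ k ∈ Icc 2 (m + 1), g k = ∑ j ∈ range m, g (j + 2) := by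
  rw [← Ico_add_one_right_eq_Icc, sum_Ico_eq_sum_range, show m + 1 + 1 - 2 = m by lia]
  simp_rw [add_comm 2]

theorem sinx_div_x_sq_add_tanx_div_x_bounds :
    ∀ x ∈ Set.Ioo (0 : ℝ) (π / 2), ∀ n : ℕ, 1 ≤ n →
      2 + (1 / Real.cos x) *
            (∑ k ∈ Finset.Icc 2 (2 * n + 1), (-1 : ℝ) ^ k * wchD k * x ^ (2 * k))
          < (Real.sin x / x) ^ 2 + Real.tan x / x ∧
      (Real.sin x / x) ^ 2 + Real.tan x / x
          < 2 + (1 / Real.cos x) *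
            (∑ k ∈ Finset.Icc 2 (2 * n), (-1 : ℝ) ^ k * wchD k * x ^ (2 * k)) := by
  rintro x ⟨hx₀, hxπ⟩ n hn
  obtain ⟨m, rfl⟩ : ∃ m, n = m + 1 := ⟨n - 1, by lia⟩
  have hcos : 0 < cos x := cos_pos_of_mem_Ioo ⟨by linarith [pi_pos], hxπ⟩
  have hx : x ^ 2 < 4 := by nlinarith [pi_lt_four]
  have hsum : HasSum (fun j ↦ (-1) ^ j * (wchD (j + 2) * x ^ (2 * (j + 2))))
      (cos x * ((sin x / x) ^ 2 + tan x / x - 2)) := by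
    simpa [sum_range_succ, pow_add, mul_assoc, wchD_zero, wchD_one] using
      (hasSum_nat_add_iff' 2).2 (hasSum_wchD_mul_pow hx₀.ne' hcos.ne')
  have hpartial (N : ℕ) : ∑ k ∈ Icc 2 (N + 1), (-1 : ℝ) ^ k * wchD k * x ^ (2 * k) =
      ∑ j ∈ range N, (-1) ^ j * (wchD (j + 2) * x ^ (2 * (j + 2))) := by
    simp [sum_Icc_two_eq_sum_range, pow_add, mul_assoc]
  have hanti := strictAnti_wchD_add_two_mul_pow hx₀.ne' hx
  rw [one_div_mul_eq_div, one_div_mul_eq_div, ← lt_sub_iff_add_lt', ← sub_lt_iff_lt_add',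
    div_lt_iff₀' hcos, lt_div_iff₀' hcos, hpartial, show 2 * (m + 1) = 2 * m + 1 + 1 by ring,
    hpartial]
  exact ⟨hanti.alternating_series_lt_tendsto hsum.tendsto_sum_nat (m + 1),
    hanti.tendsto_lt_alternating_series hsum.tendsto_sum_nat m⟩
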